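/- arXiv:2007.14307 — 3 statements merged into one kernel-verified Lean document; each statement's English description precedes it below -/
import Mathlib

section
/- Let G = (V,E) be a finite simple graph with no isolated vertices, let C be an edge cover of G, and let u be a vertex such that int(u) is finite and odd. Then for every neighbor v of u it holds that int(v) ≤ int(u) + 1. -/
open SimpleGraph Finset

variable {V : Type*} [Fintype V] [DecidableEq V]

/-- `C` is an edge cover of `G`: a set of edges of `G` such that every vertex is
incident to at least one edge of `C`. -/
def IsEdgeCover (G : SimpleGraph V) (C : Set (Sym2 V)) : Prop :=
  C ⊆ G.edgeSet ∧ ∀ v : V, ∃ e ∈ C, v ∈ e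

/-- A vertex is tight w.r.t. `C` if it is incident to exactly one edge of `C`. -/
def IsTight (C : Set (Sym2 V)) (v : V) : Prop :=
  {e ∈ C | v ∈ e}.ncard = 1

/-- A vertex is loose w.r.t. `C` if it is not tight. -/
def IsLoose (C : Set (Sym2 V)) (v : V) : Prop :=
  ¬ IsTight C v

/-- `p` is an interchanging path w.r.t. the edge cover `C`: a simple path starting at a
loose vertex whose first edge lies in `C` and such that exactly one of any two
consecutive edges lies in `C`. (The trivial path at a loose vertex is interchanging.) -/
def IsInterchanging (G : SimpleGraph V) (C : Set (Sym2 V)) {u v : V} (p : G.Walk u v) :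
    Prop :=
  p.IsPath ∧ IsLoose C u ∧
    (∀ h : 0 < p.edges.length, p.edges[0]'h ∈ C) ∧
    (∀ i : ℕ, ∀ h : i + 1 < p.edges.length,
      ((p.edges[i]'(Nat.lt_of_succ_lt h) ∈ C) ↔ (p.edges[i + 1]'h ∉ C)))

/-- `int(v)`: the length of a shortest interchanging path ending at `v` (`∞` if none). -/
noncomputable def intDist (G : SimpleGraph V) (C : Set (Sym2 V)) (v : V) : ℕ∞ :=
  ⨅ (u : V) (p : G.Walk u v) (_ : IsInterchanging G C p), (p.length : ℕ∞)

/-!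
Let `p` be a shortest interchanging path to `u`; its length is odd, so its last edge lies in `C`.
If `v` is on `p`, the prefix of `p` up to `v` is interchanging. Otherwise, if `uv ∉ C`, appending
`uv` to `p` gives an interchanging path to `v` of length `int(u) + 1`. Finally `uv ∈ C` is
impossible: `u` would lie on two edges of `C`, so it would be loose and `int(u) = 0`.
-/

section

omit [Fintype V] [DecidableEq V]

variable {G : SimpleGraph V} {C : Set (Sym2 V)}

theorem isInterchanging_iff {u v : V} (p : G.Walk u v) :
    IsInterchanging G C p ↔ p.IsPath ∧ IsLoose C u ∧
      ∀ i : ℕ, ∀ h : i < p.edges.length, p.edges[i] ∈ C ↔ Even i := by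
  refine ⟨fun ⟨hpath, hloose, hfirst, halt⟩ => ⟨hpath, hloose, fun i => ?_⟩,
    fun ⟨hpath, hloose, hpar⟩ => ⟨hpath, hloose, fun h => (hpar 0 h).2 Even.zero, fun i h => ?_⟩⟩
  · induction i with
    | zero => exact fun h => iff_of_true (hfirst h) Even.zero
    | succ i ih =>
      intro h
      rw [Nat.even_add_one, ← ih (Nat.lt_of_succ_lt h), halt i h]
      tauto
  · rw [hpar i, hpar (i + 1), Nat.even_add_one]
    tauto

namespace IsInterchanging

theorem nil {u : V} (hu : IsLoose C u) : IsInterchanging G C (Walk.nil : G.Walk u u) :=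
  (isInterchanging_iff _).2 ⟨.nil, hu, fun _ h => absurd h (by simp)⟩

theorem takeUntil [DecidableEq V] {u v w : V} {p : G.Walk u v} (hp : IsInterchanging G C p)
    (hw : w ∈ p.support) : IsInterchanging G C (p.takeUntil w hw) := by
  obtain ⟨hpath, hloose, hpar⟩ := (isInterchanging_iff p).1 hp
  have hpre := p.edges_takeUntil_prefix_edges hw
  refine (isInterchanging_iff _).2 ⟨hpath.takeUntil hw, hloose, fun i h => ?_⟩
  rw [hpre.getElem h]
  exact hpar i _

theorem concat {u v w : V} {p : G.Walk u v} (hp : IsInterchanging G C p)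
    (hw : w ∉ p.support) (h : G.Adj v w) (hvw : s(v, w) ∈ C ↔ Even p.length) :
    IsInterchanging G C (p.concat h) := by
  obtain ⟨hpath, hloose, hpar⟩ := (isInterchanging_iff p).1 hp
  refine (isInterchanging_iff _).2 ⟨hpath.concat hw h, hloose, fun i hi => ?_⟩
  simp only [Walk.edges_concat, List.concat_eq_append, List.length_append,
    List.length_singleton] at hi ⊢
  rw [List.getElem_append]
  split_ifs with hlt
  · exact hpar i hlt
  · simp only [List.getElem_singleton]
    rwa [show i = p.length by simp at hi hlt; omega]

theorem mk_penultimate_mem {u v : V} {p : G.Walk u v} (hp : IsInterchanging G C p)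
    (hodd : Odd p.length) : s(p.penultimate, v) ∈ C := by
  have hnil : ¬ p.Nil := by
    rw [← Walk.length_eq_zero_iff]; exact hodd.pos.ne'
  rw [Walk.mk_penultimate_end_eq_getLast_edges hnil, List.getLast_eq_getElem]
  refine ((isInterchanging_iff p).1 hp).2.2 _ _ |>.2 ?_
  exact Nat.Odd.sub_odd (by rwa [Walk.length_edges]) odd_one

end IsInterchanging

theorem isLoose_of_mem_of_mem {v : V} {e₁ e₂ : Sym2 V} (h₁ : e₁ ∈ C)
    (h₂ : e₂ ∈ C) (hv₁ : v ∈ e₁) (hv₂ : v ∈ e₂) (hne : e₁ ≠ e₂) : IsLoose C v := by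
  intro htight
  obtain ⟨e, he⟩ := Set.ncard_eq_one.1 htight
  have he₁ : e₁ ∈ {e ∈ C | v ∈ e} := ⟨h₁, hv₁⟩
  have he₂ : e₂ ∈ {e ∈ C | v ∈ e} := ⟨h₂, hv₂⟩
  rw [he, Set.mem_singleton_iff] at he₁ he₂
  exact hne (he₁.trans he₂.symm)

theorem intDist_le_length {u v : V} {p : G.Walk u v} (hp : IsInterchanging G C p) :
    intDist G C v ≤ p.length :=
  iInf_le_of_le u (iInf_le_of_le p (iInf_le _ hp))

theorem intDist_eq_zero_of_isLoose {u : V} (hu : IsLoose C u) : intDist G C u = 0 :=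
  nonpos_iff_eq_zero.1 (intDist_le_length (IsInterchanging.nil hu))

theorem exists_isInterchanging_length_eq_of_intDist_eq {v : V} {n : ℕ}
    (hv : intDist G C v = n) :
    ∃ (u : V) (p : G.Walk u v), IsInterchanging G C p ∧ p.length = n := by
  have hlt : intDist G C v < (n + 1 : ℕ) := by rw [hv]; exact_mod_cast n.lt_succ_self
  simp only [intDist, iInf_lt_iff] at hlt
  obtain ⟨u, p, hp, hlen⟩ := hlt
  have hle : (n : ℕ∞) ≤ p.length := hv ▸ intDist_le_length hp
  exact ⟨u, p, hp, by norm_cast at hlen hle; omega⟩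

end

theorem stmt0_general (G : SimpleGraph V)
    (C : Set (Sym2 V))
    (u : V) (n : ℕ) (hu : intDist G C u = n) (hodd : Odd n) :
    ∀ v : V, G.Adj u v → intDist G C v ≤ intDist G C u + 1 := by
  intro v huv
  obtain ⟨w, p, hp, rfl⟩ := exists_isInterchanging_length_eq_of_intDist_eq hu
  rw [hu]
  by_cases hv : v ∈ p.support
  · calc intDist G C v ≤ (p.takeUntil v hv).length := intDist_le_length (hp.takeUntil hv)
      _ ≤ p.length := by exact_mod_cast p.length_takeUntil_le_length hv
      _ ≤ p.length + 1 := le_self_add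
  by_cases huv_mem : s(u, v) ∈ C
  · have hne : s(p.penultimate, u) ≠ s(u, v) := fun h => hv <| by
      rcases Sym2.mem_iff.1 (h ▸ Sym2.mem_mk_right u v) with hpen | hend
      exacts [hpen ▸ p.getVert_mem_support _, hend ▸ p.end_mem_support]
    have hloose : IsLoose C u := isLoose_of_mem_of_mem (hp.mk_penultimate_mem hodd) huv_mem
      (Sym2.mem_mk_right _ _) (Sym2.mem_mk_left _ _) hne
    rw [intDist_eq_zero_of_isLoose hloose, eq_comm, Nat.cast_eq_zero] at hu
    exact absurd hu hodd.pos.ne'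
  · have hconcat := hp.concat hv huv (iff_of_false huv_mem (Nat.not_even_iff_odd.2 hodd))
    calc intDist G C v ≤ (p.concat huv).length := intDist_le_length hconcat
      _ = p.length + 1 := by simp

theorem stmt0 (G : SimpleGraph V) (hiso : ∀ v : V, ∃ u : V, G.Adj v u)
    (C : Set (Sym2 V)) (hC : IsEdgeCover G C)
    (u : V) (n : ℕ) (hu : intDist G C u = n) (hodd : Odd n) :
    ∀ v : V, G.Adj u v → intDist G C v ≤ intDist G C u + 1 :=
  stmt0_general G C u n hu hodd
end

section
/- Let G = (V,E) be a finite simple graph with no isolated vertices, let C be an edge cover of G, and let P = (e_1, ..., e_ℓ) be an inflating path between two distinct loose vertices u and v. Then ℓ is odd, e_i ∈ C exactly for the odd indices i, and the set C̃ = (C \ {e_i : i odd}) ∪ {e_i : i even} is an edge cover of G with |C̃| = |C| − 1. -/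
/-! Alternation forces the edges of an interchanging path to lie in `C` exactly at the even
(0-based) positions, so an inflating path, whose last edge is in `C`, has odd length `ℓ`.
The swap removes `(ℓ + 1) / 2` edges of `C` and adds `ℓ / 2` edges outside `C`. Coverage
survives: an inner vertex of the path lies on an added edge, a loose endpoint keeps a second
`C`-edge that is off the path, and every other vertex keeps its `C`-edges. -/

open SimpleGraph Finset

variable {V : Type*} [Fintype V] [DecidableEq V]

/-- `p` is an inflating path w.r.t. the edge cover `C`: an interchanging path between two
distinct loose vertices whose first and last edges lie in `C`. -/
def IsInflating (G : SimpleGraph V) (C : Set (Sym2 V)) {u v : V} (p : G.Walk u v) :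
    Prop :=
  IsInterchanging G C p ∧ IsLoose C v ∧ u ≠ v ∧
    ∃ h : 0 < p.edges.length,
      p.edges[0]'h ∈ C ∧ p.edges[p.edges.length - 1]'(by omega) ∈ C

namespace List

variable {α : Type*}

/-- For a path, `p.edges.entrySet Even` is the paper's `{e_i : i odd}`: indices here start at 0. -/
def entrySet (l : List α) (P : ℕ → Prop) : Set α :=
  {x | ∃ i, ∃ h : i < l.length, P i ∧ l[i] = x}

theorem getElem_mem_iff_even {l : List α} {C : Set α} (h0 : ∀ h : 0 < l.length, l[0] ∈ C)
    (halt : ∀ i, ∀ h : i + 1 < l.length, l[i] ∈ C ↔ l[i + 1] ∉ C) (i : ℕ) :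
    ∀ h : i < l.length, l[i] ∈ C ↔ Even i := by
  induction i with
  | zero => simpa using h0
  | succ i ih =>
    intro h
    rw [Nat.even_add_one, ← ih (by omega), halt i h, not_not]

theorem entrySet_eq_image (l : List α) (P : ℕ → Prop) :
    l.entrySet P = l.get '' {i | P i} := by
  ext x
  simp [entrySet, Fin.exists_iff]

theorem ncard_entrySet {l : List α} (hl : l.Nodup) (P : ℕ → Prop) [DecidablePred P] :
    (l.entrySet P).ncard = #{i ∈ Finset.range l.length | P i} := by
  rw [entrySet_eq_image, Set.ncard_image_of_injective _ (nodup_iff_injective_get.mp hl),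
    ← Set.ncard_image_of_injective _ Fin.val_injective, ← Set.ncard_coe_finset]
  congr 1
  ext i
  simp [Fin.exists_iff, and_comm]

end List

theorem Nat.card_filter_range_odd (n : ℕ) : #{i ∈ range n | Odd i} = n / 2 := by
  simpa [Nat.odd_iff, Nat.dvd_iff_mod_eq_zero, Nat.succ_mod_two_eq_zero_iff] using
    Nat.card_multiples n 2

theorem Nat.card_filter_range_even (n : ℕ) : #{i ∈ range n | Even i} = (n + 1) / 2 := by
  have := card_filter_add_card_filter_not (s := range n) (fun i => Even i)
  simp only [Nat.not_even_iff_odd, Nat.card_filter_range_odd, card_range] at this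
  omega

theorem Set.ncard_diff_union_of_subset_of_disjoint {α : Type*} {C A B : Set α} (hC : C.Finite)
    (hB : B.Finite) (hAC : A ⊆ C) (hCB : Disjoint C B) :
    ((C \ A) ∪ B).ncard = C.ncard - A.ncard + B.ncard := by
  rw [Set.ncard_union_eq (hCB.mono_left Set.sdiff_subset) hC.sdiff hB,
    Set.ncard_sdiff hAC (hC.subset hAC)]

omit [DecidableEq V] in
theorem IsLoose.exists_mem_ne {C : Set (Sym2 V)} {v : V} (hv : IsLoose C v)
    (hcov : ∃ e ∈ C, v ∈ e) (e : Sym2 V) : ∃ f ∈ C, v ∈ f ∧ f ≠ e := by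
  have hpos : 0 < {f ∈ C | v ∈ f}.ncard := (Set.ncard_pos (Set.toFinite _)).mpr hcov
  have hne : {f ∈ C | v ∈ f}.ncard ≠ 1 := hv
  obtain ⟨f, ⟨hfC, hvf⟩, hfe⟩ :=
    Set.exists_ne_of_one_lt_ncard (s := {f ∈ C | v ∈ f}) (by omega) e
  exact ⟨f, hfC, hvf, hfe⟩

namespace SimpleGraph.Walk

variable {G : SimpleGraph V} {u v : V}

omit [Fintype V] [DecidableEq V] in
theorem IsPath.getVert_mem_getElem_edges_iff {p : G.Walk u v} (hp : p.IsPath) {i j : ℕ}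
    (hi : i < p.edges.length) (hj : j ≤ p.length) :
    p.getVert j ∈ p.edges[i] ↔ j = i ∨ j = i + 1 := by
  have hi' : i < p.length := p.length_edges ▸ hi
  rw [getElem_edges, Sym2.mem_iff]
  constructor
  · rintro (h | h)
    · exact Or.inl (hp.getVert_injOn hj hi'.le h)
    · exact Or.inr (hp.getVert_injOn hj hi' h)
  · rintro (rfl | rfl) <;> simp

omit [Fintype V] [DecidableEq V] in
theorem exists_getVert_eq_of_mem_getElem_edges (p : G.Walk u v) {i : ℕ}
    (hi : i < p.edges.length) {w : V} (hw : w ∈ p.edges[i]) :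
    ∃ j, (j = i ∨ j = i + 1) ∧ p.getVert j = w := by
  rw [getElem_edges, Sym2.mem_iff] at hw
  rcases hw with rfl | rfl
  · exact ⟨i, Or.inl rfl, rfl⟩
  · exact ⟨i + 1, Or.inr rfl, rfl⟩

omit [Fintype V] [DecidableEq V] in
theorem exists_mem_entrySet_odd_getVert_mem (p : G.Walk u v) {j : ℕ} (hj0 : 0 < j)
    (hj : j < p.length) : ∃ e ∈ p.edges.entrySet Odd, p.getVert j ∈ e := by
  rcases Nat.even_or_odd j with ⟨k, hk⟩ | hodd
  · refine ⟨p.edges[j - 1]'(by simp; omega), ⟨j - 1, _, ⟨k - 1, by omega⟩, rfl⟩, ?_⟩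
    rw [getElem_edges, Nat.sub_add_cancel hj0]
    exact Sym2.mem_mk_right _ _
  · exact ⟨p.edges[j]'(by simpa), ⟨j, _, hodd, rfl⟩, by simp [getElem_edges]⟩

end SimpleGraph.Walk

omit [DecidableEq V] in
theorem IsEdgeCover.diff_union_of_isPath {G : SimpleGraph V} {C : Set (Sym2 V)}
    (hC : IsEdgeCover G C) {u v : V} {p : G.Walk u v} (hp : p.IsPath) (hu : IsLoose C u)
    (hv : IsLoose C v) :
    IsEdgeCover G ((C \ p.edges.entrySet Even) ∪ p.edges.entrySet Odd) := by
  refine ⟨Set.union_subset (Set.sdiff_subset.trans hC.1) ?_, fun w => ?_⟩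
  · rintro _ ⟨i, hi, -, rfl⟩
    exact p.edges_subset_edgeSet (List.getElem_mem hi)
  by_cases hw : ∃ e ∈ p.edges.entrySet Even, w ∈ e
  swap
  · obtain ⟨e, heC, hwe⟩ := hC.2 w
    exact ⟨e, Or.inl ⟨heC, fun he => hw ⟨e, he, hwe⟩⟩, hwe⟩
  obtain ⟨_, ⟨i, hi, -, rfl⟩, hwi⟩ := hw
  obtain ⟨j, hji, rfl⟩ := p.exists_getVert_eq_of_mem_getElem_edges hi hwi
  have hil : i < p.length := by simpa using hi
  by_cases hinterior : 0 < j ∧ j < p.length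
  · obtain ⟨e, he, hje⟩ := p.exists_mem_entrySet_odd_getVert_mem hinterior.1 hinterior.2
    exact ⟨e, Or.inr he, hje⟩
  -- An endpoint lies on no edge of `p` but `p.edges[i]`, and being loose it has another `C`-edge.
  have hloose : IsLoose C (p.getVert j) := by
    rcases (by omega : j = 0 ∨ j = p.length) with rfl | rfl
    · simpa using hu
    · simpa using hv
  obtain ⟨f, hfC, hjf, hfi⟩ := hloose.exists_mem_ne (hC.2 _) p.edges[i]
  refine ⟨f, Or.inl ⟨hfC, ?_⟩, hjf⟩
  rintro ⟨k, hk, -, rfl⟩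
  have hjk := (hp.getVert_mem_getElem_edges_iff hk (by omega)).mp hjf
  have hkl : k < p.length := by simpa using hk
  obtain rfl : k = i := by omega
  exact hfi rfl

theorem stmt1_general (G : SimpleGraph V)
    (C : Set (Sym2 V)) (hC : IsEdgeCover G C)
    (u v : V) (p : G.Walk u v) (hp : IsInflating G C p) :
    Odd p.length ∧
    (∀ i : ℕ, ∀ h : i < p.edges.length, (p.edges[i]'h ∈ C ↔ Even i)) ∧
    IsEdgeCover G
      ((C \ {e : Sym2 V | ∃ i : ℕ, ∃ h : i < p.edges.length, Even i ∧ p.edges[i]'h = e}) ∪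
        {e : Sym2 V | ∃ i : ℕ, ∃ h : i < p.edges.length, Odd i ∧ p.edges[i]'h = e}) ∧
    ((C \ {e : Sym2 V | ∃ i : ℕ, ∃ h : i < p.edges.length, Even i ∧ p.edges[i]'h = e}) ∪
        {e : Sym2 V | ∃ i : ℕ, ∃ h : i < p.edges.length, Odd i ∧ p.edges[i]'h = e}).ncard =
      C.ncard - 1 := by
  obtain ⟨⟨hpath, hu, hfirst, halt⟩, hv, -, hlen, -, hlast⟩ := hp
  have hparity := List.getElem_mem_iff_even hfirst halt
  have hodd : Odd p.edges.length := by
    obtain ⟨k, hk⟩ := (hparity _ _).mp hlast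
    exact ⟨k, by omega⟩
  refine ⟨p.length_edges ▸ hodd, hparity, hC.diff_union_of_isPath hpath hu hv, ?_⟩
  have hAC : p.edges.entrySet Even ⊆ C := by
    rintro _ ⟨i, hi, heven, rfl⟩
    exact (hparity i hi).mpr heven
  have hCB : Disjoint C (p.edges.entrySet Odd) := by
    refine Set.disjoint_right.mpr ?_
    rintro _ ⟨i, hi, hodd, rfl⟩ hiC
    exact Nat.not_even_iff_odd.mpr hodd ((hparity i hi).mp hiC)
  have hle := Set.ncard_le_ncard hAC
  have hnodup := hpath.isTrail.edges_nodup
  show ((C \ p.edges.entrySet Even) ∪ p.edges.entrySet Odd).ncard = C.ncard - 1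
  rw [Set.ncard_diff_union_of_subset_of_disjoint C.toFinite (Set.toFinite _) hAC hCB,
    List.ncard_entrySet hnodup, List.ncard_entrySet hnodup, Nat.card_filter_range_even,
    Nat.card_filter_range_odd]
  rw [List.ncard_entrySet hnodup, Nat.card_filter_range_even] at hle
  obtain ⟨k, hk⟩ := hodd
  omega

theorem stmt1 (G : SimpleGraph V) (hiso : ∀ v : V, ∃ u : V, G.Adj v u)
    (C : Set (Sym2 V)) (hC : IsEdgeCover G C)
    (u v : V) (p : G.Walk u v) (hp : IsInflating G C p) :
    Odd p.length ∧
    (∀ i : ℕ, ∀ h : i < p.edges.length, (p.edges[i]'h ∈ C ↔ Even i)) ∧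
    IsEdgeCover G
      ((C \ {e : Sym2 V | ∃ i : ℕ, ∃ h : i < p.edges.length, Even i ∧ p.edges[i]'h = e}) ∪
        {e : Sym2 V | ∃ i : ℕ, ∃ h : i < p.edges.length, Odd i ∧ p.edges[i]'h = e}) ∧
    ((C \ {e : Sym2 V | ∃ i : ℕ, ∃ h : i < p.edges.length, Even i ∧ p.edges[i]'h = e}) ∪
        {e : Sym2 V | ∃ i : ℕ, ∃ h : i < p.edges.length, Odd i ∧ p.edges[i]'h = e}).ncard =
      C.ncard - 1 :=
  stmt1_general G C hC u v p hp
end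

section
/- Let G = (V,E) be a finite simple graph, b : V → ℤ_{>0}, and μ a b-matching in G, and let u be a vertex such that alt(u) is finite and even. Then for every neighbor v of u it holds that alt(v) ≤ alt(u) + 1. -/
open SimpleGraph Finset

variable {V : Type*} [Fintype V] [DecidableEq V]

/-- `μ` is a `b`-matching in `G`: a multiplicity function supported on the edges of `G`
such that the total multiplicity of the edges incident to any vertex `v` is at most
`b v`. -/
def IsBMatching (G : SimpleGraph V) [DecidableRel G.Adj] (b : V → ℕ) (μ : Sym2 V → ℕ) :
    Prop :=
  (∀ e : Sym2 V, μ e ≠ 0 → e ∈ G.edgeSet) ∧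
    ∀ v : V, ∑ e ∈ G.edgeFinset.filter (fun e => v ∈ e), μ e ≤ b v

/-- The value of a `b`-matching: the total multiplicity of all edges. -/
def bValue (G : SimpleGraph V) [DecidableRel G.Adj] (μ : Sym2 V → ℕ) : ℕ :=
  ∑ e ∈ G.edgeFinset, μ e

/-- A vertex is available w.r.t. `μ` if the total multiplicity of its incident edges is
not equal to `b v` (i.e. it is not matched). -/
def Available (G : SimpleGraph V) [DecidableRel G.Adj] (b : V → ℕ) (μ : Sym2 V → ℕ)
    (v : V) : Prop :=
  ∑ e ∈ G.edgeFinset.filter (fun e => v ∈ e), μ e ≠ b v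

/-- `p` is an alternating path w.r.t. the `b`-matching `μ`: a simple path starting at an
available vertex such that every even-indexed edge (`e_2, e_4, …`, i.e. odd position in
the 0-indexed edge list) has positive multiplicity. -/
def IsAlternating (G : SimpleGraph V) [DecidableRel G.Adj] (b : V → ℕ) (μ : Sym2 V → ℕ)
    {u v : V} (p : G.Walk u v) : Prop :=
  p.IsPath ∧ Available G b μ u ∧
    ∀ i : ℕ, ∀ h : i < p.edges.length, Odd i → 0 < μ (p.edges[i]'h)

/-- `alt(v)`: the length of a shortest alternating path ending at `v` (`∞` if none). -/
noncomputable def altDist (G : SimpleGraph V) [DecidableRel G.Adj] (b : V → ℕ)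
    (μ : Sym2 V → ℕ) (v : V) : ℕ∞ :=
  ⨅ (u : V) (p : G.Walk u v) (_ : IsAlternating G b μ p), (p.length : ℕ∞)

/-!
Take a shortest alternating path `q` ending at `u`; its length `n` is even. If `v` lies on `q`,
the prefix of `q` up to `v` is an alternating path of length at most `n`. Otherwise `q`
extended by the edge `uv` is still a simple path, and it is still alternating because the new
edge has odd (1-based) index `n + 1`, where no positive multiplicity is required.
-/

section IsAlternating

variable {G : SimpleGraph V} [DecidableRel G.Adj] {b : V → ℕ} {μ : Sym2 V → ℕ} {u v w : V}

theorem IsAlternating.takeUntil {p : G.Walk u w} (hp : IsAlternating G b μ p)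
    (hv : v ∈ p.support) : IsAlternating G b μ (p.takeUntil v hv) := by
  obtain ⟨hpath, havail, hpos⟩ := hp
  have hpre := p.edges_takeUntil_prefix_edges hv
  refine ⟨hpath.takeUntil hv, havail, fun i hi hodd => ?_⟩
  rw [hpre.getElem hi]
  exact hpos i _ hodd

theorem IsAlternating.concat {p : G.Walk u v} (hp : IsAlternating G b μ p)
    (heven : Even p.length) (hw : w ∉ p.support) (hadj : G.Adj v w) :
    IsAlternating G b μ (p.concat hadj) := by
  obtain ⟨hpath, havail, hpos⟩ := hp
  have hedges : (p.concat hadj).edges = p.edges ++ [s(v, w)] := by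
    rw [Walk.edges_concat, List.concat_eq_append]
  refine ⟨hpath.concat hw hadj, havail, fun i hi hodd => ?_⟩
  have hi' : i < p.edges.length := by
    have hlen : i < p.edges.length + 1 := by simpa [hedges] using hi
    rcases Nat.lt_succ_iff_lt_or_eq.mp hlen with hlt | rfl
    · exact hlt
    · rw [Walk.length_edges] at hodd
      exact absurd heven (Nat.not_even_iff_odd.mpr hodd)
  rw [List.getElem_of_eq hedges hi, List.getElem_append_left hi']
  exact hpos i hi' hodd

end IsAlternating

section altDist

variable {G : SimpleGraph V} [DecidableRel G.Adj] {b : V → ℕ} {μ : Sym2 V → ℕ} {u v : V}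

theorem altDist_le_length {p : G.Walk u v} (hp : IsAlternating G b μ p) :
    altDist G b μ v ≤ p.length :=
  iInf_le_of_le u (iInf_le_of_le p (iInf_le _ hp))

theorem exists_isAlternating_length_eq_of_altDist_eq {n : ℕ} (h : altDist G b μ v = n) :
    ∃ (u : V) (p : G.Walk u v), IsAlternating G b μ p ∧ p.length = n := by
  have hlt : altDist G b μ v < (n + 1 : ℕ) := by rw [h]; exact_mod_cast n.lt_succ_self
  simp only [altDist, iInf_lt_iff, Nat.cast_lt] at hlt
  obtain ⟨u, p, hp, hlen⟩ := hlt
  have hge : n ≤ p.length := Nat.cast_le.mp (h ▸ altDist_le_length hp)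
  exact ⟨u, p, hp, by omega⟩

end altDist

theorem stmt8_general (G : SimpleGraph V) [DecidableRel G.Adj] (b : V → ℕ)
    (μ : Sym2 V → ℕ)
    (u : V) (n : ℕ) (hu : altDist G b μ u = n) (heven : Even n) :
    ∀ v : V, G.Adj u v → altDist G b μ v ≤ altDist G b μ u + 1 := by
  intro v hadj
  obtain ⟨w, q, hq, hlen⟩ := exists_isAlternating_length_eq_of_altDist_eq hu
  rw [hu]
  by_cases hv : v ∈ q.support
  · calc altDist G b μ v ≤ (q.takeUntil v hv).length := altDist_le_length (hq.takeUntil hv)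
      _ ≤ n := by exact_mod_cast hlen ▸ q.length_takeUntil_le_length hv
      _ ≤ n + 1 := le_self_add
  · calc altDist G b μ v ≤ (q.concat hadj).length :=
          altDist_le_length (hq.concat (hlen ▸ heven) hv hadj)
      _ = n + 1 := by rw [Walk.length_concat, hlen]; push_cast; rfl

theorem stmt8 (G : SimpleGraph V) [DecidableRel G.Adj] (b : V → ℕ) (hb : ∀ v : V, 0 < b v)
    (μ : Sym2 V → ℕ) (hμ : IsBMatching G b μ)
    (u : V) (n : ℕ) (hu : altDist G b μ u = n) (heven : Even n) :
    ∀ v : V, G.Adj u v → altDist G b μ v ≤ altDist G b μ u + 1 :=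
  stmt8_general G b μ u n hu heven
end
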